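/- Let V ⊆ W be p-operator spaces such that for all w ∈ M_n(W), ‖w‖_{2,n} = ‖w‖_{1,n}, where ‖·‖_{2,n} restricts the infimum in the definition of ‖·‖_{1,n} to factorizations v = αwβ with α^T ∈ M_{r,n}^{(p')} and β ∈ M_{r,n}^{(p)} (full-rank ℓ_{p'}- resp. ℓ_p-polar decomposible). Then the inclusion T_n(V) ↪ T_n(W) is isometric: for every v ∈ M_n(V), ‖v‖_{T_n(V)} = ‖v‖_{T_n(W)}. -/

import Mathlib

open Finset Matrix

/-- The ℓ_q norm of a finite complex sequence. -/
noncomputable def lpNorm (q : ℝ) {m : ℕ} (x : Fin m → ℂ) : ℝ :=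
  (∑ i, ‖x i‖ ^ q) ^ (1 / q)

/-- The operator norm of a matrix viewed as a map `ℓ_q^b → ℓ_q^a`. -/
noncomputable def opNorm (q : ℝ) {a b : ℕ} (A : Matrix (Fin a) (Fin b) ℂ) : ℝ :=
  sSup {c | ∃ x : Fin b → ℂ, lpNorm q x ≤ 1 ∧ c = lpNorm q (A.mulVec x)}

/-- The entrywise ℓ_q norm of a matrix. -/
noncomputable def eNorm (q : ℝ) {a b : ℕ} (A : Matrix (Fin a) (Fin b) ℂ) : ℝ :=
  (∑ i, ∑ j, ‖A i j‖ ^ q) ^ (1 / q)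

variable {V : Type*} [NormedAddCommGroup V] [NormedSpace ℂ V]

/-- The product `α w β` of scalar matrices `α ∈ M_{n,r}(ℂ)`, `β ∈ M_{r,n}(ℂ)` with a
matrix `w ∈ M_r(V)` over a vector space `V`. -/
def act {n r : ℕ} (α : Matrix (Fin n) (Fin r) ℂ) (w : Matrix (Fin r) (Fin r) V)
    (β : Matrix (Fin r) (Fin n) ℂ) : Matrix (Fin n) (Fin n) V :=
  fun i j => ∑ k, ∑ l, (α i k * β l j) • w k l

/-- The block-diagonal direct sum `v₁ ⊕ v₂ ∈ M_{n+m}(V)`. -/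
def blockDiag {n m : ℕ} (v₁ : Matrix (Fin n) (Fin n) V) (v₂ : Matrix (Fin m) (Fin m) V) :
    Matrix (Fin (n + m)) (Fin (n + m)) V :=
  Matrix.reindex finSumFinEquiv finSumFinEquiv (Matrix.fromBlocks v₁ 0 0 v₂)

/-- An (abstract) p-operator space structure on a complex Banach space `V`: a sequence of
norms on the matrix spaces `M_r(V)` satisfying the axioms `D_∞` and `M_p`. -/
structure POpSpace (p : ℝ) (V : Type*) [NormedAddCommGroup V] [NormedSpace ℂ V] where
  /-- the norm on `M_r(V)` -/
  N : ∀ r : ℕ, Matrix (Fin r) (Fin r) V → ℝ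
  nonneg : ∀ r w, 0 ≤ N r w
  add_le : ∀ r u w, N r (u + w) ≤ N r u + N r w
  eq_zero_iff : ∀ r w, N r w = 0 ↔ w = 0
  smul_eq : ∀ r (c : ℂ) w, N r (c • w) = ‖c‖ * N r w
  Dinf : ∀ (n m : ℕ) (v₁ : Matrix (Fin n) (Fin n) V) (v₂ : Matrix (Fin m) (Fin m) V),
    N (n + m) (blockDiag v₁ v₂) = max (N n v₁) (N m v₂)
  Mp : ∀ (n r : ℕ) (α : Matrix (Fin n) (Fin r) ℂ) (w : Matrix (Fin r) (Fin r) V)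
    (β : Matrix (Fin r) (Fin n) ℂ), N n (act α w β) ≤ opNorm p α * N r w * opNorm p β

/-- The quantity `‖v‖_{1,n}` on `M_n(V)`: the infimum of `‖α‖_{p'} ‖w‖ ‖β‖_p` over all
factorizations `v = α w β`. -/
noncomputable def norm1 {p : ℝ} (p' : ℝ) (S : POpSpace p V) (n : ℕ)
    (v : Matrix (Fin n) (Fin n) V) : ℝ :=
  sInf {c | ∃ (r : ℕ) (α : Matrix (Fin n) (Fin r) ℂ) (w : Matrix (Fin r) (Fin r) V)
      (β : Matrix (Fin r) (Fin n) ℂ),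
      v = act α w β ∧ c = eNorm p' α * S.N r w * eNorm p β}

/-- `τ ∈ M_{r,n}(ℂ)` is an isometry `ℓ_p^n → ℓ_p^r`. -/
def IsLpIsometry (q : ℝ) {r n : ℕ} (τ : Matrix (Fin r) (Fin n) ℂ) : Prop :=
  ∀ x : Fin n → ℂ, lpNorm q (τ.mulVec x) = lpNorm q x

/-- `β ∈ M_{r,n}^{(q)}`: a full-rank, ℓ_q-polar decomposible matrix. -/
def FullRankPolarDecomposible (q : ℝ) {r n : ℕ} (β : Matrix (Fin r) (Fin n) ℂ) : Prop :=
  β.rank = n ∧ ∃ (τ : Matrix (Fin r) (Fin n) ℂ) (β₀ : Matrix (Fin n) (Fin n) ℂ),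
    IsLpIsometry q τ ∧ β = τ * β₀

/-- The quantity `‖v‖_{2,n}` on `M_n(V)`: as `‖·‖_{1,n}` but the infimum is restricted to
factorizations `v = α w β` with `αᵀ ∈ M_{r,n}^{(p')}` and `β ∈ M_{r,n}^{(p)}`. -/
noncomputable def norm2 {p : ℝ} (p' : ℝ) (S : POpSpace p V) (n : ℕ)
    (v : Matrix (Fin n) (Fin n) V) : ℝ :=
  sInf {c | ∃ (r : ℕ) (α : Matrix (Fin n) (Fin r) ℂ) (w : Matrix (Fin r) (Fin r) V)
      (β : Matrix (Fin r) (Fin n) ℂ),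
      FullRankPolarDecomposible p' α.transpose ∧ FullRankPolarDecomposible p β ∧
      v = act α w β ∧ c = eNorm p' α * S.N r w * eNorm p β}

/-- The norm of `T_n(V)` for a subspace `V ⊆ W` (with the p-operator space structure
inherited from `W`): the infimum of `‖α‖_{p'} ‖w‖ ‖β‖_p` over factorizations `v = α w β`
with the entries of `w` lying in the subspace. -/
noncomputable def norm1Sub {p : ℝ} (p' : ℝ) (S : POpSpace p V) (P : Submodule ℂ V)
    (n : ℕ) (v : Matrix (Fin n) (Fin n) V) : ℝ :=
  sInf {c | ∃ (r : ℕ) (α : Matrix (Fin n) (Fin r) ℂ) (w : Matrix (Fin r) (Fin r) V)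
      (β : Matrix (Fin r) (Fin n) ℂ),
      (∀ k l, w k l ∈ P) ∧ v = act α w β ∧ c = eNorm p' α * S.N r w * eNorm p β}

/-! Take a factorization `v = α w β` admissible for `‖v‖_{2,n}`, with polar decompositions
`αᵀ = σ α₀` and `β = τ β₀`. Then `v = α₀ᵀ (σᵀ w τ) β₀`, and since `α₀, β₀` are invertible the
middle factor equals `α₀ᵀ⁻¹ v β₀⁻¹`, so its entries lie in `V` whenever those of `v` do.
Testing against the vector attaining equality in Hölder's inequality shows that `σᵀ` is an
`ℓ_p`-contraction, so the axiom `M_p` gives `‖σᵀ w τ‖ ≤ ‖w‖`, while the isometries leave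
`‖α‖_{p'}` and `‖β‖_p` unchanged. Hence `‖v‖_{T_n(V)} ≤ ‖v‖_{2,n} = ‖v‖_{1,n}`; the reverse inequality is trivial. -/

lemma lpNorm_nonneg (q : ℝ) {m : ℕ} (x : Fin m → ℂ) : 0 ≤ lpNorm q x := by
  unfold lpNorm; positivity

lemma lpNorm_rpow {q : ℝ} (hq : q ≠ 0) {m : ℕ} (x : Fin m → ℂ) :
    lpNorm q x ^ q = ∑ i, ‖x i‖ ^ q := by
  rw [lpNorm, one_div, Real.rpow_inv_rpow (by positivity) hq]

lemma norm_dotProduct_le_lpNorm_mul_lpNorm {p q : ℝ} (hpq : p.HolderConjugate q) {m : ℕ}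
    (x y : Fin m → ℂ) : ‖x ⬝ᵥ y‖ ≤ lpNorm p x * lpNorm q y :=
  calc ‖x ⬝ᵥ y‖ ≤ ∑ i, ‖x i‖ * ‖y i‖ := by
        simpa only [dotProduct, norm_mul] using norm_sum_le univ fun i => x i * y i
    _ ≤ lpNorm p x * lpNorm q y := by
        simpa [lpNorm, abs_norm] using
          Real.inner_le_Lp_mul_Lq univ (fun i => ‖x i‖) (fun i => ‖y i‖) hpq

lemma exists_dotProduct_eq_lpNorm_rpow {p q : ℝ} (hpq : p.HolderConjugate q) {m : ℕ}
    (z : Fin m → ℂ) :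
    ∃ y : Fin m → ℂ, lpNorm q y = lpNorm p z ^ (p - 1) ∧
      z ⬝ᵥ y = ((lpNorm p z ^ p : ℝ) : ℂ) := by
  set y : Fin m → ℂ := fun i => (starRingEnd ℂ) (z i) * ((‖z i‖ ^ (p - 2) : ℝ) : ℂ)
  have hnorm : ∀ i, ‖y i‖ ^ q = ‖z i‖ ^ p := by
    intro i
    rw [norm_mul, Complex.norm_conj, Complex.norm_real, Real.norm_of_nonneg (by positivity)]
    rcases eq_or_ne (z i) 0 with hz | hz
    · simp [hz, Real.zero_rpow hpq.ne_zero, Real.zero_rpow hpq.symm.ne_zero]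
    · rw [← Real.rpow_one_add' (norm_nonneg _) (by linarith [hpq.lt]), ← Real.rpow_mul
        (norm_nonneg _), show (1 + (p - 2)) * q = p by linarith [hpq.sub_one_mul_conj]]
  have hterm : ∀ i, z i * y i = ((‖z i‖ ^ p : ℝ) : ℂ) := by
    intro i
    rw [← mul_assoc, Complex.mul_conj', ← Complex.ofReal_pow, ← Complex.ofReal_mul,
      Complex.ofReal_inj]
    rcases eq_or_ne (z i) 0 with hz | hz
    · simp [hz, Real.zero_rpow hpq.ne_zero]
    · rw [← Real.rpow_natCast, ← Real.rpow_add (norm_pos_iff.mpr hz)]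
      norm_num
  refine ⟨y, ?_, by simp only [dotProduct, hterm, lpNorm_rpow hpq.ne_zero, Complex.ofReal_sum]⟩
  rw [lpNorm, Finset.sum_congr rfl fun i _ => hnorm i, ← lpNorm_rpow hpq.ne_zero,
    ← Real.rpow_mul (lpNorm_nonneg _ _)]
  congr 1
  have := hpq.sub_one_mul_conj
  field_simp [hpq.symm.ne_zero]
  linarith

lemma lpNorm_transpose_mulVec_le {p q : ℝ} (hpq : p.HolderConjugate q) {r n : ℕ}
    {σ : Matrix (Fin r) (Fin n) ℂ} (hσ : ∀ y, lpNorm q (σ *ᵥ y) ≤ lpNorm q y)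
    (x : Fin r → ℂ) : lpNorm p (σᵀ *ᵥ x) ≤ lpNorm p x := by
  obtain ⟨y, hy, hdual⟩ := exists_dotProduct_eq_lpNorm_rpow hpq (σᵀ *ᵥ x)
  have hZ0 := lpNorm_nonneg p (σᵀ *ᵥ x)
  generalize lpNorm p (σᵀ *ᵥ x) = Z at hy hdual hZ0 ⊢
  have key : Z * Z ^ (p - 1) ≤ lpNorm p x * Z ^ (p - 1) :=
    calc Z * Z ^ (p - 1) = ‖((Z ^ p : ℝ) : ℂ)‖ := by
          rw [Complex.norm_real, Real.norm_of_nonneg (Real.rpow_nonneg hZ0 _),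
            ← Real.rpow_one_add' hZ0 (by linarith [hpq.lt])]
          ring_nf
      _ = ‖x ⬝ᵥ (σ *ᵥ y)‖ := by rw [← hdual, mulVec_transpose, dotProduct_mulVec]
      _ ≤ lpNorm p x * lpNorm q (σ *ᵥ y) := norm_dotProduct_le_lpNorm_mul_lpNorm hpq _ _
      _ ≤ lpNorm p x * Z ^ (p - 1) := by
          rw [← hy]; exact mul_le_mul_of_nonneg_left (hσ y) (lpNorm_nonneg _ _)
  rcases hZ0.eq_or_lt with rfl | hZ
  · exact lpNorm_nonneg _ _
  · exact le_of_mul_le_mul_right key (Real.rpow_pos_of_pos hZ _)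

lemma opNorm_nonneg (q : ℝ) {a b : ℕ} (A : Matrix (Fin a) (Fin b) ℂ) : 0 ≤ opNorm q A :=
  Real.sSup_nonneg <| by rintro _ ⟨x, -, rfl⟩; exact lpNorm_nonneg _ _

lemma opNorm_le_one {q : ℝ} {a b : ℕ} {A : Matrix (Fin a) (Fin b) ℂ}
    (hA : ∀ x, lpNorm q (A *ᵥ x) ≤ lpNorm q x) : opNorm q A ≤ 1 :=
  Real.sSup_le (by rintro _ ⟨x, hx, rfl⟩; exact (hA x).trans hx) zero_le_one

lemma eNorm_nonneg (q : ℝ) {a b : ℕ} (A : Matrix (Fin a) (Fin b) ℂ) : 0 ≤ eNorm q A := by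
  unfold eNorm; positivity

lemma eNorm_transpose (q : ℝ) {a b : ℕ} (A : Matrix (Fin a) (Fin b) ℂ) :
    eNorm q Aᵀ = eNorm q A := by
  rw [eNorm, eNorm, Finset.sum_comm]
  rfl

lemma eNorm_eq_sum_lpNorm_col {q : ℝ} (hq : q ≠ 0) {a b : ℕ} (A : Matrix (Fin a) (Fin b) ℂ) :
    eNorm q A = (∑ j, lpNorm q (fun i => A i j) ^ q) ^ (1 / q) := by
  simp only [eNorm, lpNorm_rpow hq]
  rw [Finset.sum_comm]

lemma IsLpIsometry.eNorm_mul {q : ℝ} (hq : q ≠ 0) {r n m : ℕ} {τ : Matrix (Fin r) (Fin n) ℂ}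
    (hτ : IsLpIsometry q τ) (B : Matrix (Fin n) (Fin m) ℂ) : eNorm q (τ * B) = eNorm q B := by
  have hcol : ∀ j, (fun i => (τ * B) i j) = τ *ᵥ fun k => B k j := fun j => rfl
  simp only [eNorm_eq_sum_lpNorm_col hq, hcol, hτ _]

lemma isUnit_of_rank_mul_eq {K : Type*} [Field K] {r n : ℕ} {τ : Matrix (Fin r) (Fin n) K}
    {B : Matrix (Fin n) (Fin n) K} (h : (τ * B).rank = n) : IsUnit B := by
  rw [← linearIndependent_cols_iff_isUnit, linearIndependent_iff_card_eq_finrank_span,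
    Fintype.card_fin, Set.finrank, ← rank_eq_finrank_span_cols]
  exact le_antisymm (h.symm.trans_le (rank_mul_le_right τ B)) B.rank_le_width

lemma act_one_one {n : ℕ} (v : Matrix (Fin n) (Fin n) V) : act 1 v 1 = v := by
  funext i j
  simp [act, one_apply, ite_smul]

lemma act_act {n s r : ℕ} (A : Matrix (Fin n) (Fin s) ℂ) (B : Matrix (Fin s) (Fin r) ℂ)
    (w : Matrix (Fin r) (Fin r) V) (C : Matrix (Fin r) (Fin s) ℂ) (D : Matrix (Fin s) (Fin n) ℂ) :
    act A (act B w C) D = act (A * B) w (C * D) := by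
  funext i j
  simp only [act, mul_apply, Finset.smul_sum, smul_smul, Finset.sum_mul, Finset.mul_sum,
    Finset.sum_smul]
  rw [Finset.sum_comm]
  conv_rhs =>
    enter [2, a]; rw [Finset.sum_comm]
    enter [2, l]; rw [Finset.sum_comm]
  conv_rhs => rw [Finset.sum_comm]; enter [2, l]; rw [Finset.sum_comm]
  simp only [mul_comm, mul_left_comm]

lemma act_mem {n r : ℕ} {P : Submodule ℂ V} (A : Matrix (Fin n) (Fin r) ℂ)
    {w : Matrix (Fin r) (Fin r) V} (B : Matrix (Fin r) (Fin n) ℂ) (hw : ∀ k l, w k l ∈ P)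
    (i j : Fin n) : act A w B i j ∈ P :=
  P.sum_mem fun k _ => P.sum_mem fun l _ => P.smul_mem _ (hw k l)

lemma act_inv_act {n : ℕ} {A B : Matrix (Fin n) (Fin n) ℂ} (hA : IsUnit A.det)
    (hB : IsUnit B.det) (w : Matrix (Fin n) (Fin n) V) : act A⁻¹ (act A w B) B⁻¹ = w := by
  rw [act_act, nonsing_inv_mul _ hA, mul_nonsing_inv _ hB, act_one_one]

lemma POpSpace.N_act_le {p : ℝ} (S : POpSpace p V) {n r : ℕ} {α : Matrix (Fin n) (Fin r) ℂ}
    {β : Matrix (Fin r) (Fin n) ℂ} (hα : ∀ x, lpNorm p (α *ᵥ x) ≤ lpNorm p x)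
    (hβ : ∀ x, lpNorm p (β *ᵥ x) ≤ lpNorm p x) (w : Matrix (Fin r) (Fin r) V) :
    S.N n (act α w β) ≤ S.N r w :=
  calc S.N n (act α w β) ≤ opNorm p α * S.N r w * opNorm p β := S.Mp n r α w β
    _ ≤ 1 * S.N r w * 1 := by
        have := S.nonneg r w
        gcongr
        exacts [opNorm_nonneg _ _, opNorm_le_one hα, opNorm_le_one hβ]
    _ = S.N r w := by ring

lemma fullRankPolarDecomposible_one (q : ℝ) (n : ℕ) :
    FullRankPolarDecomposible q (1 : Matrix (Fin n) (Fin n) ℂ) :=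
  ⟨by simp, 1, 1, fun x => by rw [one_mulVec], (one_mul _).symm⟩

lemma FullRankPolarDecomposible.exists_isUnit_det {q : ℝ} {r n : ℕ}
    {β : Matrix (Fin r) (Fin n) ℂ} (hβ : FullRankPolarDecomposible q β) :
    ∃ (τ : Matrix (Fin r) (Fin n) ℂ) (β₀ : Matrix (Fin n) (Fin n) ℂ),
      IsLpIsometry q τ ∧ IsUnit β₀.det ∧ β = τ * β₀ := by
  obtain ⟨hrank, τ, β₀, hτ, rfl⟩ := hβ
  exact ⟨τ, β₀, hτ, (isUnit_iff_isUnit_det _).mp (isUnit_of_rank_mul_eq hrank), rfl⟩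

section Norms

variable {p p' : ℝ} (S : POpSpace p V) (P : Submodule ℂ V) {n : ℕ}

lemma norm1Sub_le {r : ℕ} {v : Matrix (Fin n) (Fin n) V} {α : Matrix (Fin n) (Fin r) ℂ}
    {w : Matrix (Fin r) (Fin r) V} {β : Matrix (Fin r) (Fin n) ℂ} (hw : ∀ k l, w k l ∈ P)
    (hv : v = act α w β) : norm1Sub p' S P n v ≤ eNorm p' α * S.N r w * eNorm p β := by
  refine csInf_le ⟨0, ?_⟩ ⟨r, α, w, β, hw, hv, rfl⟩
  rintro _ ⟨r, α, w, β, -, -, rfl⟩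
  exact mul_nonneg (mul_nonneg (eNorm_nonneg _ _) (S.nonneg _ _)) (eNorm_nonneg _ _)

lemma norm1_le_norm1Sub {v : Matrix (Fin n) (Fin n) V} (hv : ∀ i j, v i j ∈ P) :
    norm1 p' S n v ≤ norm1Sub p' S P n v := by
  refine csInf_le_csInf ⟨0, ?_⟩ ⟨_, n, 1, v, 1, hv, (act_one_one v).symm, rfl⟩ ?_
  · rintro _ ⟨r, α, w, β, -, rfl⟩
    exact mul_nonneg (mul_nonneg (eNorm_nonneg _ _) (S.nonneg _ _)) (eNorm_nonneg _ _)
  · rintro _ ⟨r, α, w, β, -, hfact, rfl⟩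
    exact ⟨r, α, w, β, hfact, rfl⟩

lemma norm1Sub_le_norm2 (hpq : p.HolderConjugate p') {v : Matrix (Fin n) (Fin n) V}
    (hv : ∀ i j, v i j ∈ P) : norm1Sub p' S P n v ≤ norm2 p' S n v := by
  refine le_csInf ⟨_, n, 1, v, 1, by simpa using fullRankPolarDecomposible_one p' n,
    fullRankPolarDecomposible_one p n, (act_one_one v).symm, rfl⟩ ?_
  rintro _ ⟨r, α, w, β, hα, hβ, rfl, rfl⟩
  obtain ⟨σ, α₀, hσ, hα₀, hαT⟩ := hα.exists_isUnit_det
  obtain ⟨τ, β₀, hτ, hβ₀, rfl⟩ := hβ.exists_isUnit_det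
  obtain rfl : α = α₀ᵀ * σᵀ := by rw [← transpose_mul, ← hαT, transpose_transpose]
  have hfact : act (α₀ᵀ * σᵀ) w (τ * β₀) = act α₀ᵀ (act σᵀ w τ) β₀ := (act_act ..).symm
  have hmem : ∀ k l, act σᵀ w τ k l ∈ P := by
    rw [← act_inv_act (A := α₀ᵀ) (by rwa [det_transpose]) hβ₀ (act σᵀ w τ), ← hfact]
    exact act_mem _ _ hv
  calc norm1Sub p' S P n (act (α₀ᵀ * σᵀ) w (τ * β₀))
      ≤ eNorm p' α₀ᵀ * S.N n (act σᵀ w τ) * eNorm p β₀ := norm1Sub_le S P hmem hfact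
    _ ≤ eNorm p' α₀ᵀ * S.N r w * eNorm p β₀ := by
        have hN := S.N_act_le (lpNorm_transpose_mulVec_le hpq fun y => (hσ y).le)
          (fun x => (hτ x).le) w
        have := eNorm_nonneg p' α₀ᵀ
        have := eNorm_nonneg p β₀
        gcongr
    _ = eNorm p' (α₀ᵀ * σᵀ) * S.N r w * eNorm p (τ * β₀) := by
        rw [← transpose_mul, eNorm_transpose, eNorm_transpose, hσ.eNorm_mul hpq.symm.ne_zero,
          hτ.eNorm_mul hpq.ne_zero]

end Norms

theorem inclusion_isometric_general (p p' : ℝ) (hp : 1 < p)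
    (hconj : 1 / p + 1 / p' = 1) (S : POpSpace p V) (P : Submodule ℂ V) (n : ℕ)
    (h : ∀ w : Matrix (Fin n) (Fin n) V, norm2 p' S n w = norm1 p' S n w) :
    ∀ v : Matrix (Fin n) (Fin n) V, (∀ i j, v i j ∈ P) →
      norm1Sub p' S P n v = norm1 p' S n v := by
  intro v hv
  have hpq : p.HolderConjugate p' :=
    Real.holderConjugate_iff.mpr ⟨hp, by simpa only [one_div] using hconj⟩
  refine le_antisymm ?_ (norm1_le_norm1Sub S P hv)
  rw [← h v]
  exact norm1Sub_le_norm2 S P hpq hv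

/-- Proposition 4.5: if `‖w‖_{2,n} = ‖w‖_{1,n}` for every `w ∈ M_n(W)`, then the
inclusion `T_n(V) ↪ T_n(W)` is isometric for every subspace `V ⊆ W`. -/
theorem inclusion_isometric (p p' : ℝ) (hp : 1 < p) (hp' : 1 < p')
    (hconj : 1 / p + 1 / p' = 1) (S : POpSpace p V) (P : Submodule ℂ V) (n : ℕ)
    (h : ∀ w : Matrix (Fin n) (Fin n) V, norm2 p' S n w = norm1 p' S n w) :
    ∀ v : Matrix (Fin n) (Fin n) V, (∀ i j, v i j ∈ P) →
      norm1Sub p' S P n v = norm1 p' S n v :=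
  inclusion_isometric_general p p' hp hconj S P n h
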